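/- Let Γ be a finite irreducible simplicial graph with |VΓ| ≥ 2 and {G_v} a collection of non-trivial groups. Then the graph product G = ΓG contains a quasi-isometrically embedded non-abelian free group of rank 2, unless G is the infinite dihedral group ℤ/2 * ℤ/2. -/

import Mathlib

open scoped commutatorElement

/-- The commutation relators defining a graph product: commutators of elements of
vertex groups joined by an edge of `Γ`. -/
def GraphProductRels {V : Type*} (Γ : SimpleGraph V) (G : V → Type*)
    [∀ v, Group (G v)] : Set (Monoid.CoprodI G) :=
  {x | ∃ (u v : V) (a : G u) (b : G v), Γ.Adj u v ∧
    x = ⁅Monoid.CoprodI.of a, Monoid.CoprodI.of b⁆}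

/-- The graph product of the groups `G v` over the simplicial graph `Γ`: the quotient
of the free product by the normal closure of the edge commutation relators. -/
abbrev GraphProduct {V : Type*} (Γ : SimpleGraph V) (G : V → Type*)
    [∀ v, Group (G v)] : Type _ :=
  Monoid.CoprodI G ⧸ Subgroup.normalClosure (GraphProductRels Γ G)

/-- The canonical map from a vertex group to the graph product. -/
def GraphProduct.of {V : Type*} {Γ : SimpleGraph V} {G : V → Type*}
    [∀ v, Group (G v)] {v : V} : G v →* GraphProduct Γ G :=
  (QuotientGroup.mk' _).comp Monoid.CoprodI.of

/-- The special subgroup of a graph product corresponding to a subset `A` of vertices. -/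
def GraphProduct.special {V : Type*} (Γ : SimpleGraph V) (G : V → Type*)
    [∀ v, Group (G v)] (A : Set V) : Subgroup (GraphProduct Γ G) :=
  Subgroup.closure (⋃ v ∈ A, Set.range (GraphProduct.of (Γ := Γ) (v := v)))

/-- Word length of a group element with respect to a set `S` (letters from `S ∪ S⁻¹`). -/
noncomputable def wordLength {G : Type*} [Group G] (S : Set G) (g : G) : ℕ :=
  sInf {n | ∃ w : List G, w.length = n ∧ (∀ x ∈ w, x ∈ S ∨ x⁻¹ ∈ S) ∧ w.prod = g}

/-- A simplicial graph is irreducible if its vertex set admits no partition into two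
non-empty sets `A`, `B` such that every vertex of `A` is adjacent to every vertex
of `B`. -/
def SimpleGraph.Irreducible {V : Type*} (Γ : SimpleGraph V) : Prop :=
  ¬∃ A B : Set V, A.Nonempty ∧ B.Nonempty ∧ A ∪ B = Set.univ ∧ A ∩ B = ∅ ∧
    ∀ a ∈ A, ∀ b ∈ B, Γ.Adj a b

/-!
Killing the neighbours of a vertex `u` retracts `ΓG` onto a free product `A ∗ B`, with `G u`
embedded in `B`, the vertex groups of the non-neighbours of `u` embedded in `A`, and every vertex
generator sent to a single letter; so the syllable length in `A ∗ B` is at most the word length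
in `ΓG`. For letters `a₁ ≠ a₂` of `A` and `b` of `B`, the commutators `⁅aₖ, b⁆` freely generate a
free group, and the reduced spelling of the image of a reduced word `w` has at least `|w|`
letters: at each junction of consecutive factors `⁅aₖ, b⁆ ^ (±1)` at most one pair `b⁻¹ b`
cancels, after which `aₖ⁻¹ aₗ ≠ 1` (`k ≠ l`) survives as a single letter. Together with the trivial bound `4 |w|` this makes
`x_k ↦ ⁅aₖ, b⁆` a quasi-isometric embedding of `F₂`.

Two non-neighbours `v`, `w` of `u` give `a₁, a₂` from `G v` and `G w`. Otherwise irreducibility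
forces `Γ` to be two non-adjacent vertices; then either a vertex group has two distinct
non-trivial elements, or both have order two and `ΓG ≅ ℤ/2 ∗ ℤ/2`.
-/

namespace Monoid.CoprodI

variable {ι : Type*} {M : ι → Type*}

section

variable [∀ i, Monoid (M i)]

/-- The conditions defining `Word M`, as a predicate on lists. -/
def IsReducedWord (l : List (Σ i, M i)) : Prop :=
  (∀ x ∈ l, x.2 ≠ 1) ∧ l.IsChain fun x y => x.1 ≠ y.1

@[simp]
theorem isReducedWord_nil : IsReducedWord ([] : List (Σ i, M i)) :=
  ⟨by simp, List.isChain_nil⟩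

@[simp]
theorem isReducedWord_cons {x : Σ i, M i} {l : List (Σ i, M i)} :
    IsReducedWord (x :: l) ↔ x.2 ≠ 1 ∧ (∀ y ∈ l.head?, x.1 ≠ y.1) ∧ IsReducedWord l := by
  simp only [IsReducedWord, List.forall_mem_cons, List.isChain_cons]
  tauto

variable [∀ i, DecidableEq (M i)]

namespace Word

theorem length_tail_le_length_rcons {i : ι} (p : Pair M i) :
    p.tail.toList.length ≤ (rcons p).toList.length := by
  unfold rcons; split <;> simp

theorem length_rcons_le {i : ι} (p : Pair M i) :
    (rcons p).toList.length ≤ p.tail.toList.length + 1 := by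
  unfold rcons; split <;> simp

variable [DecidableEq ι]

theorem length_of_smul_le {i : ι} (m : M i) (w : Word M) :
    (of m • w).toList.length ≤ w.toList.length + 1 := by
  have htail := length_tail_le_length_rcons (equivPair i w)
  rw [← equivPair_symm, Equiv.symm_apply_apply] at htail
  rw [of_smul_def]
  exact (length_rcons_le _).trans (Nat.add_le_add_right htail 1)

end Word

variable [DecidableEq ι]

def syllableLength (g : CoprodI M) : ℕ := (Word.equiv g).toList.length

@[simp]
theorem syllableLength_one : syllableLength (1 : CoprodI M) = 0 := by
  simp [syllableLength, Word.equiv, Word.empty]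

theorem syllableLength_prod (w : Word M) : syllableLength w.prod = w.toList.length := by
  change (Word.equiv (Word.equiv.symm w)).toList.length = _
  rw [Equiv.apply_symm_apply]

theorem syllableLength_of_mul_le {i : ι} (m : M i) (g : CoprodI M) :
    syllableLength (of m * g) ≤ syllableLength g + 1 := by
  simp only [syllableLength, Word.equiv, Equiv.coe_fn_mk, mul_smul]
  exact Word.length_of_smul_le m _

theorem syllableLength_list_prod_le (l : List (CoprodI M))
    (hl : ∀ x ∈ l, ∃ (i : ι) (m : M i), x = of m) : syllableLength l.prod ≤ l.length := by
  induction l with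
  | nil => simp
  | cons x l ih =>
    obtain ⟨i, m, rfl⟩ := hl x List.mem_cons_self
    rw [List.prod_cons, List.length_cons]
    exact (syllableLength_of_mul_le m _).trans
      (Nat.add_le_add_right (ih fun y hy => hl y (List.mem_cons_of_mem _ hy)) 1)

theorem syllableLength_prod_of_isReducedWord {l : List (Σ i, M i)} (hl : IsReducedWord l) :
    syllableLength (l.map fun x => of x.2).prod = l.length :=
  syllableLength_prod ⟨l, hl.1, hl.2⟩

end

variable [∀ i, Group (M i)]

variable {κ : Type*} {i j : ι} (a : κ → M i) (b : M j)

/-- The first two letters of the reduced spelling of the image of `x_k ^ (±1)` under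
`x_k ↦ ⁅a k, b⁆`: `a k, b` for the spelling `a k, b, (a k)⁻¹, b⁻¹` of `⁅a k, b⁆` and
`b, a k` for the spelling `b, a k, b⁻¹, (a k)⁻¹` of its inverse. -/
def commutatorLead : κ × Bool → List (Σ i, M i)
  | (k, true) => [⟨i, a k⟩, ⟨j, b⟩]
  | (k, false) => [⟨j, b⟩, ⟨i, a k⟩]

variable {a b}

theorem exists_commutatorLead_append_cons (hij : i ≠ j) (ha : ∀ k, a k ≠ 1)
    (hinj : Function.Injective a) {g g' : κ × Bool}
    (hgg' : g.1 = g'.1 → g.2 = g'.2) {rest : List (Σ i, M i)}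
    (hrest : IsReducedWord (commutatorLead a b g' ++ rest)) :
    ∃ rest', IsReducedWord (commutatorLead a b g ++ rest') ∧ rest.length + 1 ≤ rest'.length ∧
      ((commutatorLead a b g ++ rest').map fun x => of x.2).prod =
        cond g.2 ⁅of (a g.1), of b⁆ ⁅of (a g.1), of b⁆⁻¹ *
          ((commutatorLead a b g' ++ rest).map fun x => of x.2).prod := by
  obtain ⟨k, s⟩ := g
  obtain ⟨k', t⟩ := g'
  have hmerge : k ≠ k' → (a k)⁻¹ * a k' ≠ 1 := fun hk h =>
    hk (hinj (inv_mul_eq_one.mp h))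
  cases s <;> cases t <;> simp only [commutatorLead, List.cons_append, List.nil_append,
    isReducedWord_cons] at hrest ⊢
  · refine ⟨[⟨j, b⁻¹⟩, ⟨i, (a k)⁻¹⟩, ⟨j, b⟩, ⟨i, a k'⟩] ++ rest, ?_, by simp, ?_⟩
    · simp_all [Ne.symm hij]
    · simp [commutatorElement_def, mul_assoc]
  · refine ⟨[⟨j, b⁻¹⟩, ⟨i, (a k)⁻¹ * a k'⟩, ⟨j, b⟩] ++ rest, ?_, by simp, ?_⟩
    · have hk : k ≠ k' := fun h => by simpa using hgg' h
      simp_all [Ne.symm hij]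
    · simp [commutatorElement_def, mul_assoc]
  · refine ⟨⟨i, (a k)⁻¹ * a k'⟩ :: rest, ?_, by simp, ?_⟩
    · have hk : k ≠ k' := fun h => by simpa using hgg' h
      simp_all [Ne.symm hij]
    · simp [commutatorElement_def, mul_assoc]
  · refine ⟨[⟨i, (a k)⁻¹⟩, ⟨j, b⁻¹⟩, ⟨i, a k'⟩, ⟨j, b⟩] ++ rest, ?_, by simp, ?_⟩
    · simp_all [Ne.symm hij]
    · simp [commutatorElement_def, mul_assoc]

theorem exists_commutatorLead_append (hij : i ≠ j) (ha : ∀ k, a k ≠ 1)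
    (hinj : Function.Injective a) (hb : b ≠ 1) (g : κ × Bool) (L : List (κ × Bool))
    (hL : FreeGroup.IsReduced (g :: L)) :
    ∃ rest, IsReducedWord (commutatorLead a b g ++ rest) ∧ L.length + 2 ≤ rest.length ∧
      ((commutatorLead a b g ++ rest).map fun x => of x.2).prod =
        ((g :: L).map fun x => cond x.2 ⁅of (a x.1), of b⁆ ⁅of (a x.1), of b⁆⁻¹).prod := by
  induction L generalizing g with
  | nil =>
    obtain ⟨k, s⟩ := g
    cases s
    · refine ⟨[⟨j, b⁻¹⟩, ⟨i, (a k)⁻¹⟩], ?_, by simp, ?_⟩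
      · simp [commutatorLead, hij, Ne.symm hij, ha, hb]
      · simp [commutatorLead, commutatorElement_def, mul_assoc]
    · refine ⟨[⟨i, (a k)⁻¹⟩, ⟨j, b⁻¹⟩], ?_, by simp, ?_⟩
      · simp [commutatorLead, hij, Ne.symm hij, ha, hb]
      · simp [commutatorLead, commutatorElement_def, mul_assoc]
  | cons g' L ih =>
    rw [FreeGroup.isReduced_cons_cons] at hL
    obtain ⟨rest, hred, hlen, hprod⟩ := ih g' hL.2
    obtain ⟨rest', hred', hlen', hprod'⟩ :=
      exists_commutatorLead_append_cons hij ha hinj hL.1 hred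
    refine ⟨rest', hred', by simp only [List.length_cons]; omega, ?_⟩
    rw [hprod', hprod, List.map_cons (a := g), List.prod_cons]

variable [DecidableEq κ] [DecidableEq ι] [∀ i, DecidableEq (M i)]

theorem norm_le_syllableLength_lift_commutator (hij : i ≠ j) (ha : ∀ k, a k ≠ 1)
    (hinj : Function.Injective a) (hb : b ≠ 1) (w : FreeGroup κ) :
    w.norm ≤ syllableLength (FreeGroup.lift (fun k => ⁅of (a k), of b⁆) w) := by
  rw [← FreeGroup.mk_toWord (x := w), FreeGroup.lift_mk, FreeGroup.norm, FreeGroup.toWord_mk,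
    FreeGroup.reduce_toWord]
  rcases hw : w.toWord with _ | ⟨g, L⟩
  · simp
  obtain ⟨rest, hred, hlen, hprod⟩ :=
    exists_commutatorLead_append hij ha hinj hb g L (hw ▸ FreeGroup.isReduced_toWord)
  rw [← hprod, syllableLength_prod_of_isReducedWord hred]
  obtain ⟨k, s⟩ := g
  cases s <;> simp [commutatorLead] <;> omega

theorem injective_lift_commutator (hij : i ≠ j) (ha : ∀ k, a k ≠ 1)
    (hinj : Function.Injective a) (hb : b ≠ 1) :
    Function.Injective (FreeGroup.lift fun k => ⁅of (a k), of b⁆) := by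
  refine (injective_iff_map_eq_one _).mpr fun w hw => ?_
  have := norm_le_syllableLength_lift_commutator hij ha hinj hb w
  rwa [hw, syllableLength_one, Nat.le_zero, FreeGroup.norm_eq_zero] at this

end Monoid.CoprodI

section WordLength

variable {H K : Type*} [Group H] [Group K] {S : Set H} {T : Set K}

theorem wordLength_prod_le_length {l : List H} (hl : ∀ x ∈ l, x ∈ S ∨ x⁻¹ ∈ S) :
    wordLength S l.prod ≤ l.length :=
  Nat.sInf_le ⟨l, rfl, hl, rfl⟩

theorem exists_length_eq_wordLength {g : H} (hg : g ∈ Subgroup.closure S) :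
    ∃ l : List H, l.length = wordLength S g ∧ (∀ x ∈ l, x ∈ S ∨ x⁻¹ ∈ S) ∧ l.prod = g := by
  rw [← Subgroup.mem_toSubmonoid, Subgroup.closure_toSubmonoid] at hg
  obtain ⟨l, hl, hprod⟩ := Submonoid.exists_list_of_mem_closure hg
  exact Nat.sInf_mem (s := {n | ∃ l : List H, l.length = n ∧ (∀ x ∈ l, x ∈ S ∨ x⁻¹ ∈ S) ∧
    l.prod = g}) ⟨_, l, rfl, hl, hprod⟩

theorem le_wordLength {ℓ : H → ℕ}
    (hℓ : ∀ l : List H, (∀ x ∈ l, x ∈ S ∨ x⁻¹ ∈ S) → ℓ l.prod ≤ l.length)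
    {g : H} (hg : g ∈ Subgroup.closure S) : ℓ g ≤ wordLength S g := by
  obtain ⟨l, hlen, hl, rfl⟩ := exists_length_eq_wordLength hg
  exact hlen ▸ hℓ l hl

theorem wordLength_map_le (φ : H →* K) {k : ℕ}
    (hφ : ∀ s ∈ S, ∃ l : List K, (∀ x ∈ l, x ∈ T ∨ x⁻¹ ∈ T) ∧ l.length ≤ k ∧ l.prod = φ s)
    {g : H} (hg : g ∈ Subgroup.closure S) : wordLength T (φ g) ≤ k * wordLength S g := by
  obtain ⟨l, hlen, hl, rfl⟩ := exists_length_eq_wordLength hg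
  suffices ∃ l' : List K, (∀ x ∈ l', x ∈ T ∨ x⁻¹ ∈ T) ∧ l'.length ≤ k * l.length ∧
      l'.prod = φ l.prod by
    obtain ⟨l', hl', hlen', hprod⟩ := this
    exact hprod ▸ hlen ▸ (wordLength_prod_le_length hl').trans hlen'
  clear hlen hg
  induction l with
  | nil => exact ⟨[], by simp, by simp, by simp⟩
  | cons x l ih =>
    obtain ⟨l', hl', hlen', hprod⟩ := ih fun y hy => hl y (List.mem_cons_of_mem x hy)
    obtain ⟨m, hm, hmlen, hmprod⟩ : ∃ m : List K, (∀ y ∈ m, y ∈ T ∨ y⁻¹ ∈ T) ∧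
        m.length ≤ k ∧ m.prod = φ x := by
      rcases hl x List.mem_cons_self with hx | hx
      · exact hφ x hx
      · obtain ⟨m, hm, hmlen, hmprod⟩ := hφ x⁻¹ hx
        refine ⟨(m.map (·⁻¹)).reverse, ?_, by simpa using hmlen, ?_⟩
        · intro y hy
          obtain ⟨z, hz, rfl⟩ := List.mem_map.mp (List.mem_reverse.mp hy)
          rw [inv_inv]
          exact (hm z hz).symm
        · rw [← List.prod_inv_reverse, hmprod, map_inv, inv_inv]
    refine ⟨m ++ l', ?_, ?_, ?_⟩
    · exact List.forall_mem_append.mpr ⟨hm, hl'⟩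
    · simp only [List.length_append, List.length_cons]
      nlinarith
    · rw [List.prod_append, List.prod_cons, map_mul, hmprod, hprod]

theorem FreeGroup.wordLength_le_norm {κ : Type*} [DecidableEq κ] (w : FreeGroup κ) :
    wordLength (Set.range FreeGroup.of) w ≤ w.norm := by
  let spell : κ × Bool → FreeGroup κ := fun p =>
    cond p.2 (FreeGroup.of p.1) (FreeGroup.of p.1)⁻¹
  have hw : (w.toWord.map spell).prod = w := by
    rw [← FreeGroup.lift_mk, FreeGroup.mk_toWord, FreeGroup.lift_of_eq_id, MonoidHom.id_apply]
  calc wordLength _ w = wordLength _ (w.toWord.map spell).prod := by rw [hw]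
    _ ≤ (w.toWord.map spell).length := wordLength_prod_le_length fun x hx => by
      obtain ⟨⟨k, s⟩, -, rfl⟩ := List.mem_map.mp hx
      cases s <;> simp [spell]
    _ = w.norm := List.length_map _

def IsQIEmbedding (S : Set H) (T : Set K) (φ : H →* K) : Prop :=
  ∃ c : ℝ, 1 ≤ c ∧ ∃ C : ℝ, 0 ≤ C ∧ ∀ w : H,
    (wordLength T (φ w) : ℝ) ≤ c * (wordLength S w) + C ∧
      (1 / c) * (wordLength S w) - C ≤ (wordLength T (φ w) : ℝ)

theorem isQIEmbedding_of_le {φ : H →* K} (c : ℕ) (hc : 1 ≤ c)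
    (hupper : ∀ w, wordLength T (φ w) ≤ c * wordLength S w)
    (hlower : ∀ w, wordLength S w ≤ wordLength T (φ w)) : IsQIEmbedding S T φ := by
  refine ⟨c, by exact_mod_cast hc, 0, le_rfl, fun w => ⟨?_, ?_⟩⟩
  · simpa using (Nat.cast_le (α := ℝ)).mpr (hupper w)
  · have hc' : (1 : ℝ) ≤ c := by exact_mod_cast hc
    have hlow : (wordLength S w : ℝ) ≤ wordLength T (φ w) := by exact_mod_cast hlower w
    have hnn : (0 : ℝ) ≤ wordLength S w := Nat.cast_nonneg _
    rw [sub_zero, one_div, inv_mul_le_iff₀ (by positivity)]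
    nlinarith

end WordLength

open Monoid CoprodI in
theorem injective_and_isQIEmbedding_lift_commutator {K : Type*} [Group K] {T : Set K}
    {ι : Type*} [DecidableEq ι] {M : ι → Type*} [∀ i, Group (M i)] [∀ i, DecidableEq (M i)]
    (ρ : K →* CoprodI M) (hρ : ∀ t ∈ T, ∃ (i : ι) (m : M i), ρ t = of m)
    {κ : Type*} [DecidableEq κ] {i j : ι} (hij : i ≠ j) {a : κ → M i} {b : M j}
    (ha : ∀ k, a k ≠ 1) (hinj : Function.Injective a) (hb : b ≠ 1)
    {g : κ → K} {h : K} (hg : ∀ k, g k ∈ T) (hh : h ∈ T)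
    (hga : ∀ k, ρ (g k) = of (a k)) (hhb : ρ h = of b) :
    Function.Injective (FreeGroup.lift fun k => ⁅g k, h⁆) ∧
      IsQIEmbedding (Set.range FreeGroup.of) T (FreeGroup.lift fun k => ⁅g k, h⁆) := by
  set φ := FreeGroup.lift fun k => ⁅g k, h⁆
  have hρφ : ∀ w, ρ (φ w) = FreeGroup.lift (fun k => ⁅of (a k), of b⁆) w := by
    suffices ρ.comp φ = FreeGroup.lift fun k => ⁅of (a k), of b⁆ from DFunLike.congr_fun this
    ext k
    simp [φ, map_commutatorElement, hga, hhb]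
  have hmem : ∀ w, φ w ∈ Subgroup.closure T := by
    refine fun w => FreeGroup.range_lift_le ?_ ⟨w, rfl⟩
    rintro _ ⟨k, rfl⟩
    have hgk := Subgroup.subset_closure (hg k)
    have hh' := Subgroup.subset_closure hh
    simp only [commutatorElement_def]
    exact mul_mem (mul_mem (mul_mem hgk hh') (inv_mem hgk)) (inv_mem hh')
  have hletters : ∀ l : List K, (∀ x ∈ l, x ∈ T ∨ x⁻¹ ∈ T) →
      syllableLength (ρ l.prod) ≤ l.length := fun l hl => by
    rw [map_list_prod, ← List.length_map ρ]
    refine syllableLength_list_prod_le _ fun x hx => ?_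
    obtain ⟨y, hy, rfl⟩ := List.mem_map.mp hx
    rcases hl y hy with hy | hy
    · exact hρ y hy
    · obtain ⟨i, m, hm⟩ := hρ _ hy
      exact ⟨i, m⁻¹, by rw [map_inv, ← hm, map_inv, inv_inv]⟩
  refine ⟨fun w₁ w₂ hw => injective_lift_commutator hij ha hinj hb ?_, ?_⟩
  · rw [← hρφ, ← hρφ, hw]
  refine isQIEmbedding_of_le 4 (by norm_num) (fun w => ?_) (fun w => ?_)
  · refine wordLength_map_le φ ?_ (by simp [FreeGroup.closure_range_of])
    rintro _ ⟨k, rfl⟩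
    refine ⟨[g k, h, (g k)⁻¹, h⁻¹], ?_, by simp, by simp [φ, commutatorElement_def, mul_assoc]⟩
    simp [hg k, hh]
  · calc wordLength _ w ≤ w.norm := FreeGroup.wordLength_le_norm w
      _ ≤ syllableLength (ρ (φ w)) :=
        hρφ w ▸ norm_le_syllableLength_lift_commutator hij ha hinj hb w
      _ ≤ wordLength T (φ w) :=
        le_wordLength (ℓ := fun x => syllableLength (ρ x)) hletters (hmem w)

theorem Nat.card_eq_two_of_forall_ne_one {H : Type*} [Group H] [Nontrivial H]
    (h : ∀ x y : H, x ≠ 1 → y ≠ 1 → x = y) : Nat.card H = 2 := by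
  obtain ⟨x, hx⟩ := exists_ne (1 : H)
  exact (Nat.card_eq_two_iff' 1).mpr ⟨x, hx, fun y hy => h y x hy hx⟩

namespace GraphProduct

variable {V : Type*} {Γ : SimpleGraph V} {G : V → Type*} [∀ v, Group (G v)]

def lift {H : Type*} [Group H] (f : ∀ v, G v →* H)
    (hf : ∀ u v, Γ.Adj u v → ∀ (x : G u) (y : G v), Commute (f u x) (f v y)) :
    GraphProduct Γ G →* H :=
  QuotientGroup.lift _ (Monoid.CoprodI.lift f) <| Subgroup.normalClosure_le_normal <| by
    rintro _ ⟨u, v, x, y, huv, rfl⟩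
    simp [map_commutatorElement, commutatorElement_eq_one_iff_commute.mpr (hf u v huv x y)]

@[simp]
theorem lift_of {H : Type*} [Group H] (f : ∀ v, G v →* H)
    (hf : ∀ u v, Γ.Adj u v → ∀ (x : G u) (y : G v), Commute (f u x) (f v y)) {v : V}
    (x : G v) : lift f hf (of x) = f v x := by
  simp [lift, GraphProduct.of]

theorem hom_ext {H : Type*} [Group H] {f f' : GraphProduct Γ G →* H}
    (h : ∀ v, f.comp (of (v := v)) = f'.comp of) : f = f' :=
  QuotientGroup.monoidHom_ext _ <| Monoid.CoprodI.ext_hom _ _ h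

theorem nonempty_mulEquiv_coprod_of_eq_bot [DecidableEq V] {p q : V} (hpq : p ≠ q)
    (hpair : ∀ r, r = p ∨ r = q) (hΓ : Γ = ⊥) {H : Type*} [Group H] (e : ∀ v, G v ≃* H) :
    Nonempty (GraphProduct Γ G ≃* Monoid.Coprod H H) := by
  let F : GraphProduct Γ G →* Monoid.Coprod H H :=
    lift (fun v => (if v = p then Monoid.Coprod.inl else Monoid.Coprod.inr).comp
      (e v).toMonoidHom) (by simp [hΓ])
  let F' : Monoid.Coprod H H →* GraphProduct Γ G :=
    Monoid.Coprod.lift (of.comp (e p).symm.toMonoidHom) (of.comp (e q).symm.toMonoidHom)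
  refine ⟨MonoidHom.toMulEquiv F F' ?_ ?_⟩
  · refine hom_ext fun v => ?_
    rcases hpair v with rfl | rfl <;> ext x <;> simp [F, F', hpq.symm]
  · ext x <;> simp [F, F', hpq.symm]

variable [DecidableEq V] [DecidableRel Γ.Adj]

def toCoprodPi (u : V) : GraphProduct Γ G →* Monoid.CoprodI fun _ : Bool => ∀ v, G v :=
  lift (fun v => (Monoid.CoprodI.of (i := decide (v = u))).comp
      (if Γ.Adj u v then 1 else MonoidHom.mulSingle G v)) <| by
    intro v w hvw x y
    by_cases hv : Γ.Adj u v
    · simp [hv]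
    by_cases hw : Γ.Adj u w
    · simp [hw]
    have hvu : v ≠ u := by rintro rfl; exact hw hvw
    have hwu : w ≠ u := by rintro rfl; exact hv hvw.symm
    simp only [MonoidHom.comp_apply, if_neg hv, if_neg hw, hvu, hwu, decide_false]
    exact (Pi.mulSingle_commute hvw.ne x y).map _

theorem toCoprodPi_of (u : V) {v : V} (x : G v) :
    toCoprodPi (Γ := Γ) u (of x) =
      Monoid.CoprodI.of (i := decide (v = u)) (if Γ.Adj u v then 1 else Pi.mulSingle v x) := by
  simp only [toCoprodPi, lift_of, MonoidHom.comp_apply]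
  split_ifs <;> rfl

theorem exists_injective_isQIEmbedding_of_not_adj {u v w : V} (hvu : v ≠ u) (hwu : w ≠ u)
    (huv : ¬Γ.Adj u v) (huw : ¬Γ.Adj u w) {α₁ : G v} {α₂ : G w} {β : G u}
    (hα₁ : α₁ ≠ 1) (hα₂ : α₂ ≠ 1) (hβ : β ≠ 1) (hα : Pi.mulSingle v α₁ ≠ Pi.mulSingle w α₂) :
    ∃ φ : FreeGroup (Fin 2) →* GraphProduct Γ G, Function.Injective φ ∧
      IsQIEmbedding (Set.range FreeGroup.of)
        (⋃ v, Set.range (of (Γ := Γ) (G := G) (v := v))) φ := by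
  classical
  have hletter : ∀ {p : V} (x : G p),
      of (Γ := Γ) x ∈ ⋃ v, Set.range (of (Γ := Γ) (G := G) (v := v)) :=
    fun x => Set.mem_iUnion_of_mem _ ⟨x, rfl⟩
  refine ⟨_, injective_and_isQIEmbedding_lift_commutator (toCoprodPi u) ?_ Bool.false_ne_true
    (a := ![Pi.mulSingle v α₁, Pi.mulSingle w α₂]) (b := Pi.mulSingle u β)
    (g := ![of α₁, of α₂]) (h := of β) ?_ (by simpa using hα) (by simpa using hβ) ?_
    (hletter β) ?_ ?_⟩
  · rintro _ ⟨_, ⟨p, rfl⟩, x, rfl⟩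
    exact ⟨_, _, toCoprodPi_of u x⟩
  · simp [Fin.forall_fin_two, hα₁, hα₂]
  · exact Fin.forall_fin_two.mpr ⟨hletter α₁, hletter α₂⟩
  · simp [Fin.forall_fin_two, toCoprodPi_of, hvu, hwu, huv, huw]
  · simp [toCoprodPi_of]

end GraphProduct

namespace SimpleGraph.Irreducible

variable {V : Type*} {Γ : SimpleGraph V}

theorem exists_ne_not_adj (hΓ : Γ.Irreducible) [Nontrivial V] (p : V) :
    ∃ q, q ≠ p ∧ ¬Γ.Adj p q := by
  by_contra! h
  refine hΓ ⟨{p}, {p}ᶜ, Set.singleton_nonempty p, exists_ne p, Set.union_compl_self _,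
    Set.inter_compl_self _, ?_⟩
  rintro a rfl b hb
  exact h b hb

theorem exists_not_adj_not_adj_or_eq_bot (hΓ : Γ.Irreducible) [Nontrivial V] :
    (∃ u v w, v ≠ u ∧ w ≠ u ∧ v ≠ w ∧ ¬Γ.Adj u v ∧ ¬Γ.Adj u w) ∨
      ∃ p q : V, p ≠ q ∧ (∀ r, r = p ∨ r = q) ∧ Γ = ⊥ := by
  refine or_iff_not_imp_left.mpr fun h => ?_
  push Not at h
  obtain ⟨p⟩ := ‹Nontrivial V›.to_nonempty
  obtain ⟨q, hqp, hpq⟩ := hΓ.exists_ne_not_adj p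
  have hqp' : ¬Γ.Adj q p := fun h => hpq h.symm
  have hpair : ∀ r, r = p ∨ r = q := by
    by_contra! hr
    obtain ⟨r, hrp, hrq⟩ := hr
    refine hΓ ⟨{p, q}, {p, q}ᶜ, Set.insert_nonempty p {q}, ⟨r, by simp [hrp, hrq]⟩,
      Set.union_compl_self _, Set.inter_compl_self _, ?_⟩
    rintro a ha b hb
    simp only [Set.mem_compl_iff, Set.mem_insert_iff, Set.mem_singleton_iff, not_or] at hb
    rcases ha with rfl | rfl
    · exact h a q b hqp hb.1 (Ne.symm hb.2) hpq
    · exact h a p b (Ne.symm hqp) hb.2 (Ne.symm hb.1) hqp'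
  refine ⟨p, q, hqp.symm, hpair, ?_⟩
  ext a b
  rcases hpair a with rfl | rfl <;> rcases hpair b with rfl | rfl <;> simp [hpq, hqp']

end SimpleGraph.Irreducible

open GraphProduct in
/-- A graph product over a finite irreducible graph with at least two
vertices and non-trivial vertex groups contains a quasi-isometrically embedded
non-abelian free group of rank 2, unless it is the infinite dihedral group
`ℤ/2 * ℤ/2`. -/
theorem graphProduct_qi_free_subgroup {V : Type*} [Fintype V] (Γ : SimpleGraph V)
    (G : V → Type*) [∀ v, Group (G v)] [∀ v, Nontrivial (G v)]
    (hirr : Γ.Irreducible) (hcard : 2 ≤ Fintype.card V) :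
    (∃ φ : FreeGroup (Fin 2) →* GraphProduct Γ G, Function.Injective φ ∧
      ∃ c : ℝ, 1 ≤ c ∧ ∃ C : ℝ, 0 ≤ C ∧ ∀ w : FreeGroup (Fin 2),
        (wordLength (⋃ v : V, Set.range (GraphProduct.of (Γ := Γ) (G := G) (v := v)))
            (φ w) : ℝ) ≤ c * (wordLength (Set.range (FreeGroup.of (α := Fin 2))) w) + C ∧
        (1 / c) * (wordLength (Set.range (FreeGroup.of (α := Fin 2))) w) - C ≤
          (wordLength (⋃ v : V, Set.range (GraphProduct.of (Γ := Γ) (G := G) (v := v)))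
            (φ w) : ℝ)) ∨
    Nonempty (GraphProduct Γ G ≃*
      Monoid.Coprod (Multiplicative (ZMod 2)) (Multiplicative (ZMod 2))) := by
  classical
  have : Nontrivial V := Fintype.one_lt_card_iff_nontrivial.mp hcard
  rcases hirr.exists_not_adj_not_adj_or_eq_bot with
    ⟨u, v, w, hvu, hwu, hvw, huv, huw⟩ | ⟨p, q, hpq, hpair, hΓ⟩
  · obtain ⟨α₁, hα₁⟩ := exists_ne (1 : G v)
    obtain ⟨α₂, hα₂⟩ := exists_ne (1 : G w)
    obtain ⟨β, hβ⟩ := exists_ne (1 : G u)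
    refine .inl (exists_injective_isQIEmbedding_of_not_adj hvu hwu huv huw hα₁ hα₂ hβ ?_)
    exact fun h => hα₁ (by simpa [hvw] using congrFun h v)
  by_cases hbig : ∃ (v : V) (x y : G v), x ≠ 1 ∧ y ≠ 1 ∧ x ≠ y
  · obtain ⟨v, α₁, α₂, hα₁, hα₂, hα⟩ := hbig
    obtain ⟨u, hvu⟩ := exists_ne v
    obtain ⟨β, hβ⟩ := exists_ne (1 : G u)
    refine .inl (exists_injective_isQIEmbedding_of_not_adj (Ne.symm hvu) (Ne.symm hvu)
      (by simp [hΓ]) (by simp [hΓ]) hα₁ hα₂ hβ ?_)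
    simpa using hα
  · push Not at hbig
    exact .inr <| nonempty_mulEquiv_coprod_of_eq_bot hpq hpair hΓ fun v =>
      mulEquivOfPrimeCardEq (Nat.card_eq_two_of_forall_ne_one (hbig v)) (by simp)
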